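/- arXiv:1107.2351 — 2 statements merged into one kernel-verified Lean document; each statement's English description precedes it below -/
import Mathlib

section
/- Let Ω ⊂ ℝⁿ be a bounded domain with diameter D. Let X be a C² vector field on Ω satisfying ΔX = 2∇_X X − V(x, X(x)) in Ω, where V : Ω × ℝⁿ → ℝⁿ is C¹ and the composite vector field x ↦ V(x, X(x)) has ω : [0, ∞) → ℝ as a modulus of expansion, i.e. (V(y, X(y)) − V(x, X(x))) · (y − x)/|y − x| ≥ 2ω(|y − x|/2) for all x ≠ y in Ω. Let ψ : [0, D/2) → ℝ be C² with ψ(0) = 0, ψ'(s) < 0 for all s, and ψ'' ≤ −2ψψ' + ω. Define C(x, y) = (X(y) − X(x)) · (y − x)/|y − x| + 2ψ(|y − x|/2) for x ≠ y in Ω and C(x, x) = 0. Then there is no (x₀, y₀) ∈ Ω × Ω with C(x₀, y₀) < 0 at which C attains a local minimum over Ω × Ω. -/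
/-!
At a local minimum `(x, y)` of `C` with `C x y < 0` we have `x ≠ y`; write `y - x = d • e` with
`‖e‖ = 1`, so that `d < D` because `Ω` is open. Three variations of the pair `(x, y)` are tested.
Moving both points by the same vector `v` shows that `v ↦ ⟪D²X(y)(v, v) - D²X(x)(v, v), e⟫` is
nonnegative; moving them apart along `e` gives `⟪D²X(y)(e, e) - D²X(x)(e, e), e⟫ ≥ -2ψ''(d/2)`;
taking the trace of this nonnegative form in an orthonormal basis containing `e` yields
`⟪ΔX(y) - ΔX(x), e⟫ ≥ -2ψ''(d/2)`. Moving the points along `X` itself, the first variation and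
Cauchy–Schwarz give `⟪∇_X X(y) - ∇_X X(x), e⟫ ≤ -ψ'(d/2) ⟪X y - X x, e⟫`. Inserting the equation
`ΔX = 2∇_X X - V` and the expansion of `V` yields `ψ'' ≥ ψ' ⟪X y - X x, e⟫ + ω` at `d/2`, while
`ψ' < 0` and `⟪X y - X x, e⟫ < -2ψ` make the right side exceed `-2ψψ' + ω ≥ ψ''`.
-/

open scoped RealInnerProductSpace
open Set MeasureTheory

noncomputable def lap {n : ℕ} (f : EuclideanSpace ℝ (Fin n) → ℝ) (x : EuclideanSpace ℝ (Fin n)) : ℝ :=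
  ∑ i, fderiv ℝ (fun y => fderiv ℝ f y (EuclideanSpace.single i 1)) x
      (EuclideanSpace.single i 1)

open Filter Topology

theorem IsLocalMin.nonneg_of_hasDerivAt_of_hasDerivAt {g g' : ℝ → ℝ} {a m : ℝ}
    (hmin : IsLocalMin g a) (hg : ∀ᶠ t in 𝓝 a, HasDerivAt g (g' t) t)
    (hg' : HasDerivAt g' m a) : 0 ≤ m := by
  -- otherwise `g' < 0` on some `(a, b]`, and the mean value theorem gives `g b < g a`
  by_contra! hm
  have hg'a : g' a = 0 := hmin.hasDerivAt_eq_zero hg.self_of_nhds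
  have hslope : ∀ᶠ t in 𝓝[>] a, slope g' a t < 0 :=
    ((hasDerivAt_iff_tendsto_slope.1 hg').mono_left (nhdsWithin_mono _ (by simp))).eventually
      (eventually_lt_nhds hm)
  obtain ⟨b, hab, hb⟩ := mem_nhdsGT_iff_exists_Ioc_subset.1
    (hslope.and (nhdsWithin_le_nhds (hg.and hmin)))
  have hab : a < b := hab
  have hcont : ContinuousOn g (Icc a b) := fun t ht =>
    (ht.1.eq_or_lt.elim (fun h => h ▸ hg.self_of_nhds) fun h => (hb ⟨h, ht.2⟩).2.1)
      |>.continuousAt.continuousWithinAt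
  obtain ⟨c, hc, hgc⟩ := exists_hasDerivAt_eq_slope g g' hab hcont
    fun t ht => (hb (Ioo_subset_Ioc_self ht)).2.1
  have hgc_neg : g' c < 0 := by
    have hc' := (hb (Ioo_subset_Ioc_self hc)).1
    rw [slope_def_field, hg'a, sub_zero] at hc'
    exact neg_of_div_neg_left hc' (sub_pos.2 hc.1).le
  have hgb : g a ≤ g b := (hb ⟨hab, le_rfl⟩).2.2
  rw [hgc] at hgc_neg
  linarith [neg_of_div_neg_left hgc_neg (sub_pos.2 hab).le]

theorem OrthonormalBasis.sum_apply_self_eq {E ι κ : Type*} [NormedAddCommGroup E]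
    [InnerProductSpace ℝ E] [Fintype ι] [Fintype κ] (b : OrthonormalBasis ι ℝ E)
    (c : OrthonormalBasis κ ℝ E) (B : E →L[ℝ] E →L[ℝ] ℝ) :
    ∑ i, B (b i) (b i) = ∑ j, B (c j) (c j) := by
  calc ∑ i, B (b i) (b i) = ∑ i, B (b i) (∑ j, ⟪c j, b i⟫ • c j) := by simp only [c.sum_repr']
    _ = ∑ j, B (∑ i, ⟪b i, c j⟫ • b i) (c j) := by
        simp only [map_sum, map_smul, smul_eq_mul, sum_apply, smul_apply, real_inner_comm (b _)]
        exact Finset.sum_comm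
    _ = ∑ j, B (c j) (c j) := by simp only [b.sum_repr']

theorem OrthonormalBasis.apply_self_le_sum {E ι : Type*} [NormedAddCommGroup E]
    [InnerProductSpace ℝ E] [FiniteDimensional ℝ E] [Fintype ι] (b : OrthonormalBasis ι ℝ E)
    {B : E →L[ℝ] E →L[ℝ] ℝ} (hB : ∀ v, 0 ≤ B v v) {e : E} (he : ‖e‖ = 1) :
    B e e ≤ ∑ i, B (b i) (b i) := by
  obtain ⟨s, c, hs, hc⟩ := (orthonormal_subsingleton_iff.2 (by simpa using he) :
    Orthonormal ℝ (Subtype.val : ({e} : Set E) → E)).exists_orthonormalBasis_extension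
  rw [b.sum_apply_self_eq c]
  have hes : e ∈ s := hs rfl
  simpa [hc] using Finset.single_le_sum (fun j _ => hB (c j)) (Finset.mem_univ (⟨e, hes⟩ : s))

section Lines

variable {E F : Type*} [NormedAddCommGroup E] [NormedSpace ℝ E] [NormedAddCommGroup F]
  [NormedSpace ℝ F]

theorem tendsto_line (z v : E) : Tendsto (fun t : ℝ => z + t • v) (𝓝 0) (𝓝 z) := by
  have hline : Continuous fun t : ℝ => z + t • v := by fun_prop
  simpa using hline.tendsto 0

theorem Filter.Eventually.comp_line {p : E → Prop} {z : E} (h : ∀ᶠ w in 𝓝 z, p w) (v : E) :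
    ∀ᶠ t : ℝ in 𝓝 0, p (z + t • v) :=
  (tendsto_line z v).eventually h

theorem hasDerivAt_comp_line {f : E → F} {z v : E} {t : ℝ}
    (hf : DifferentiableAt ℝ f (z + t • v)) :
    HasDerivAt (fun s : ℝ => f (z + s • v)) (fderiv ℝ f (z + t • v) v) t := by
  have hline : HasDerivAt (fun s : ℝ => z + s • v) v t := by
    simpa using ((hasDerivAt_id t).smul_const v).const_add z
  exact hf.hasFDerivAt.comp_hasDerivAt t hline

theorem hasDerivAt_fderiv_comp_line {f : E → F} {z : E} (hf : DifferentiableAt ℝ (fderiv ℝ f) z)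
    (v w : E) :
    HasDerivAt (fun t : ℝ => fderiv ℝ f (z + t • v) w) (fderiv ℝ (fderiv ℝ f) z v w) 0 := by
  have h := hasDerivAt_comp_line (f := fderiv ℝ f) (v := v) (t := 0) (by simpa using hf)
  rw [zero_smul, add_zero] at h
  exact (ContinuousLinearMap.apply ℝ F w).hasFDerivAt.comp_hasDerivAt 0 h

theorem ContDiffAt.eventually_differentiableAt {f : E → F} {z : E} (hf : ContDiffAt ℝ 2 f z) :
    ∀ᶠ w in 𝓝 z, DifferentiableAt ℝ f w :=
  (hf.eventually (by simp)).mono fun _ hw => hw.differentiableAt (by simp)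

theorem ContDiffAt.differentiableAt_fderiv {f : E → F} {z : E} (hf : ContDiffAt ℝ 2 f z) :
    DifferentiableAt ℝ (fderiv ℝ f) z :=
  (hf.fderiv_right (m := 1) le_rfl).differentiableAt (by simp)

end Lines

theorem IsOpen.dist_lt_diam {E : Type*} [NormedAddCommGroup E] [NormedSpace ℝ E] {Ω : Set E}
    (hΩ : IsOpen Ω) (hb : Bornology.IsBounded Ω) {x y : E} (hx : x ∈ Ω) (hy : y ∈ Ω)
    (hxy : x ≠ y) : dist x y < Metric.diam Ω := by
  have hmem : ∀ᶠ t in 𝓝[>] (0 : ℝ), y + t • (y - x) ∈ Ω :=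
    ((hΩ.eventually_mem hy).comp_line (y - x)).filter_mono nhdsWithin_le_nhds
  obtain ⟨t, hmem, ht⟩ := (hmem.and self_mem_nhdsWithin).exists
  have hpos : 0 < ‖y - x‖ := norm_pos_iff.2 (sub_ne_zero.2 hxy.symm)
  calc dist x y = ‖y - x‖ := dist_eq_norm' x y
    _ < (1 + t) * ‖y - x‖ := by nlinarith [ht]
    _ = dist x (y + t • (y - x)) := by
        rw [dist_eq_norm', show y + t • (y - x) - x = (1 + t) • (y - x) by module, norm_smul,
          Real.norm_of_nonneg (by linarith [ht])]
    _ ≤ Metric.diam Ω := Metric.dist_le_diam_of_mem hb hx hmem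

theorem HasDerivAt.norm {F : Type*} [NormedAddCommGroup F] [InnerProductSpace ℝ F] {f : ℝ → F}
    {f' : F} {t : ℝ} (hf : HasDerivAt f f' t) (h0 : f t ≠ 0) :
    HasDerivAt (fun s => ‖f s‖) (⟪f t, f'⟫ / ‖f t‖) t := by
  have h := hf.norm_sq.sqrt (by positivity)
  simp only [Real.sqrt_sq (norm_nonneg _)] at h
  convert h using 1
  field_simp

section TwoPoint

variable {E : Type*} [NormedAddCommGroup E] [InnerProductSpace ℝ E]

noncomputable def twoPoint (X : E → E) (ψ : ℝ → ℝ) (x y : E) : ℝ :=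
  ⟪X y - X x, ‖y - x‖⁻¹ • (y - x)⟫ + 2 * ψ (‖y - x‖ / 2)

variable {X : E → E} {ψ ψ' ψ'' : ℝ → ℝ} {x y e : E} {d : ℝ}

theorem twoPoint_eq_of_sub_eq_smul (he : ‖e‖ = 1) (hd : 0 < d) (hyx : y - x = d • e) :
    twoPoint X ψ x y = ⟪X y - X x, e⟫ + 2 * ψ (d / 2) := by
  have hnorm : ‖y - x‖ = d := by rw [hyx, norm_smul, he, Real.norm_of_nonneg hd.le, mul_one]
  rw [twoPoint, hnorm, hyx, smul_smul, inv_mul_cancel₀ hd.ne', one_smul]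

theorem le_inner_fderiv_fderiv_add_of_isLocalMin {a b : E} {ρ ρ' : ℝ → ℝ} {r : ℝ}
    (hx : ContDiffAt ℝ 2 X x) (hy : ContDiffAt ℝ 2 X y)
    (hρ : ∀ᶠ t in 𝓝 0, HasDerivAt ρ (ρ' t) t) (hρ' : HasDerivAt ρ' r 0)
    (hmin : IsLocalMin (fun t : ℝ => ⟪X (y + t • b) - X (x + t • a), e⟫ + ρ t) 0) :
    0 ≤ ⟪fderiv ℝ (fderiv ℝ X) y b b - fderiv ℝ (fderiv ℝ X) x a a, e⟫ + r := by
  refine hmin.nonneg_of_hasDerivAt_of_hasDerivAt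
    (g' := fun t => ⟪fderiv ℝ X (y + t • b) b - fderiv ℝ X (x + t • a) a, e⟫ + ρ' t) ?_ ?_
  · filter_upwards [hx.eventually_differentiableAt.comp_line a,
      hy.eventually_differentiableAt.comp_line b, hρ] with t hxt hyt hρt
    simpa using (((hasDerivAt_comp_line hyt).sub (hasDerivAt_comp_line hxt)).inner ℝ
      (hasDerivAt_const t e)).fun_add hρt
  · simpa using (((hasDerivAt_fderiv_comp_line hy.differentiableAt_fderiv b b).sub
      (hasDerivAt_fderiv_comp_line hx.differentiableAt_fderiv a a)).inner ℝ
      (hasDerivAt_const 0 e)).fun_add hρ'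

theorem inner_fderiv_fderiv_nonneg_of_isLocalMin (hx : ContDiffAt ℝ 2 X x)
    (hy : ContDiffAt ℝ 2 X y) (he : ‖e‖ = 1) (hd : 0 < d) (hyx : y - x = d • e) (v : E)
    (hmin : IsLocalMin (fun t : ℝ => twoPoint X ψ (x + t • v) (y + t • v)) 0) :
    0 ≤ ⟪fderiv ℝ (fderiv ℝ X) y v v - fderiv ℝ (fderiv ℝ X) x v v, e⟫ := by
  have hshift : ∀ t : ℝ, twoPoint X ψ (x + t • v) (y + t • v) =
      ⟪X (y + t • v) - X (x + t • v), e⟫ + 2 * ψ (d / 2) := fun t =>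
    twoPoint_eq_of_sub_eq_smul he hd (by rw [add_sub_add_right_eq_sub, hyx])
  simp only [hshift] at hmin
  simpa using le_inner_fderiv_fderiv_add_of_isLocalMin hx hy
    (Eventually.of_forall fun t => hasDerivAt_const t _) (hasDerivAt_const 0 0) hmin

theorem neg_two_mul_le_inner_fderiv_fderiv_of_isLocalMin (hx : ContDiffAt ℝ 2 X x)
    (hy : ContDiffAt ℝ 2 X y) (he : ‖e‖ = 1) (hd : 0 < d) (hyx : y - x = d • e)
    (hψ : ∀ᶠ s in 𝓝 (d / 2), HasDerivAt ψ (ψ' s) s) (hψ' : HasDerivAt ψ' (ψ'' (d / 2)) (d / 2))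
    (hmin : IsLocalMin (fun t : ℝ => twoPoint X ψ (x + t • -e) (y + t • e)) 0) :
    -(2 * ψ'' (d / 2)) ≤ ⟪fderiv ℝ (fderiv ℝ X) y e e - fderiv ℝ (fderiv ℝ X) x e e, e⟫ := by
  have hshift : (fun t : ℝ => twoPoint X ψ (x + t • -e) (y + t • e)) =ᶠ[𝓝 0]
      fun t => ⟪X (y + t • e) - X (x + t • -e), e⟫ + 2 * ψ (d / 2 + t) := by
    filter_upwards [Ioi_mem_nhds (neg_lt_zero.2 (half_pos hd))] with t ht
    have ht : 0 < d + 2 * t := by linarith [mem_Ioi.1 ht]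
    rw [twoPoint_eq_of_sub_eq_smul he ht (by linear_combination (norm := module) hyx)]
    ring_nf
  have hline : Tendsto (fun t : ℝ => d / 2 + t) (𝓝 0) (𝓝 (d / 2)) := by
    simpa using (tendsto_id (x := 𝓝 (0 : ℝ))).const_add (d / 2)
  have hρ : ∀ᶠ t in 𝓝 0, HasDerivAt (fun t => 2 * ψ (d / 2 + t)) (2 * ψ' (d / 2 + t)) t :=
    (hline.eventually hψ).mono fun t ht => (ht.comp_const_add (d / 2) t).const_mul 2
  have hρ' : HasDerivAt (fun t => 2 * ψ' (d / 2 + t)) (2 * ψ'' (d / 2)) 0 :=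
    (HasDerivAt.comp_const_add (d / 2) 0 (by rwa [add_zero])).const_mul 2
  have h := le_inner_fderiv_fderiv_add_of_isLocalMin hx hy hρ hρ' (hmin.congr hshift)
  simp only [map_neg, neg_apply, neg_neg] at h
  linarith

theorem hasDerivAt_twoPoint_line (hx : DifferentiableAt ℝ X x) (hy : DifferentiableAt ℝ X y)
    (he : ‖e‖ = 1) (hd : 0 < d) (hyx : y - x = d • e) (hψ : HasDerivAt ψ (ψ' (d / 2)) (d / 2))
    (a b : E) :
    HasDerivAt (fun t : ℝ => twoPoint X ψ (x + t • a) (y + t • b))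
      (⟪fderiv ℝ X y b - fderiv ℝ X x a, e⟫
        + (⟪X y - X x, b - a⟫ - ⟪X y - X x, e⟫ * ⟪b - a, e⟫) / d + ψ' (d / 2) * ⟪b - a, e⟫) 0 := by
  set w : ℝ → E := fun t => (y + t • b) - (x + t • a)
  have hw0 : w 0 = d • e := by simp [w, hyx]
  have hnorm : ‖w 0‖ = d := by rw [hw0, norm_smul, he, Real.norm_of_nonneg hd.le, mul_one]
  have hw : HasDerivAt w (b - a) 0 := by
    simpa using (((hasDerivAt_id (0 : ℝ)).smul_const b).const_add y).fun_sub
      (((hasDerivAt_id (0 : ℝ)).smul_const a).const_add x)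
  have hN : HasDerivAt (fun t => ‖w t‖) ⟪b - a, e⟫ 0 := by
    convert hw.norm (norm_ne_zero_iff.1 (by rw [hnorm]; exact hd.ne')) using 1
    rw [hnorm, hw0, real_inner_smul_left, real_inner_comm]
    field_simp
  have hU : HasDerivAt (fun t : ℝ => X (y + t • b) - X (x + t • a))
      (fderiv ℝ X y b - fderiv ℝ X x a) 0 := by
    simpa using (hasDerivAt_comp_line (z := y) (v := b) (t := 0) (by simpa using hy)).fun_sub
      (hasDerivAt_comp_line (z := x) (v := a) (t := 0) (by simpa using hx))
  have hunit := (hN.fun_inv (by rw [hnorm]; exact hd.ne')).fun_smul hw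
  have hψN := ((show HasDerivAt ψ (ψ' (d / 2)) (‖w 0‖ / 2) by rwa [hnorm]).comp 0
    (hN.div_const 2)).const_mul 2
  refine ((hU.inner ℝ hunit).fun_add hψN).congr_deriv ?_
  rw [hnorm, hw0]
  simp only [zero_smul, add_zero, smul_smul, inner_add_right, real_inner_smul_right]
  field_simp
  ring

theorem inner_fderiv_apply_self_sub_le_of_isLocalMin (hx : DifferentiableAt ℝ X x)
    (hy : DifferentiableAt ℝ X y) (he : ‖e‖ = 1) (hd : 0 < d) (hyx : y - x = d • e)
    (hψ : HasDerivAt ψ (ψ' (d / 2)) (d / 2))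
    (hmin : IsLocalMin (fun t : ℝ => twoPoint X ψ (x + t • X x) (y + t • X y)) 0) :
    ⟪fderiv ℝ X y (X y) - fderiv ℝ X x (X x), e⟫ ≤ -(ψ' (d / 2) * ⟪X y - X x, e⟫) := by
  have hcrit := hmin.hasDerivAt_eq_zero (hasDerivAt_twoPoint_line hx hy he hd hyx hψ _ _)
  have hCS : ⟪X y - X x, e⟫ * ⟪X y - X x, e⟫ ≤ ⟪X y - X x, X y - X x⟫ := by
    simpa [real_inner_self_eq_norm_sq, he] using real_inner_mul_inner_self_le (X y - X x) e
  have hnonneg := div_nonneg (sub_nonneg.2 hCS) hd.le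
  linarith

theorem neg_two_mul_le_inner_sum_fderiv_fderiv_of_isLocalMin [FiniteDimensional ℝ E] {ι : Type*}
    [Fintype ι] (b : OrthonormalBasis ι ℝ E) (hx : ContDiffAt ℝ 2 X x) (hy : ContDiffAt ℝ 2 X y)
    (he : ‖e‖ = 1) (hd : 0 < d) (hyx : y - x = d • e)
    (hψ : ∀ᶠ s in 𝓝 (d / 2), HasDerivAt ψ (ψ' s) s) (hψ' : HasDerivAt ψ' (ψ'' (d / 2)) (d / 2))
    (hmin : ∀ v w : E, IsLocalMin (fun t : ℝ => twoPoint X ψ (x + t • v) (y + t • w)) 0) :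
    -(2 * ψ'' (d / 2)) ≤ ⟪∑ i, fderiv ℝ (fderiv ℝ X) y (b i) (b i)
      - ∑ i, fderiv ℝ (fderiv ℝ X) x (b i) (b i), e⟫ := by
  set B : E →L[ℝ] E →L[ℝ] ℝ := (ContinuousLinearMap.compL ℝ E E ℝ (innerSL ℝ e)).comp
    (fderiv ℝ (fderiv ℝ X) y - fderiv ℝ (fderiv ℝ X) x)
  have hB : ∀ v w, B v w = ⟪fderiv ℝ (fderiv ℝ X) y v w - fderiv ℝ (fderiv ℝ X) x v w, e⟫ :=
    fun v w => by simp [B, real_inner_comm, inner_sub_right]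
  calc -(2 * ψ'' (d / 2)) ≤ B e e := by
        rw [hB]
        exact neg_two_mul_le_inner_fderiv_fderiv_of_isLocalMin hx hy he hd hyx hψ hψ' (hmin _ _)
    _ ≤ ∑ i, B (b i) (b i) := b.apply_self_le_sum (fun v => by
        rw [hB]; exact inner_fderiv_fderiv_nonneg_of_isLocalMin hx hy he hd hyx v (hmin v v)) he
    _ = _ := by simp only [hB, ← sum_inner, Finset.sum_sub_distrib]

theorem isLocalMin_twoPoint_comp_line {C : E → E → ℝ} {Ω : Set E} (hΩ : IsOpen Ω) (hx : x ∈ Ω)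
    (hy : y ∈ Ω) (hxy : x ≠ y) (hC : ∀ x y, x ≠ y → C x y = twoPoint X ψ x y)
    (hmin : IsLocalMinOn (fun p : E × E => C p.1 p.2) (Ω ×ˢ Ω) (x, y)) (a b : E) :
    IsLocalMin (fun t : ℝ => twoPoint X ψ (x + t • a) (y + t • b)) 0 := by
  have hpath : Tendsto (fun t : ℝ => (x + t • a, y + t • b)) (𝓝 0) (𝓝 (x, y)) :=
    (tendsto_line x a).prodMk_nhds (tendsto_line y b)
  have hCmin : IsLocalMin (fun p : E × E => C p.1 p.2) (x, y) :=
    hmin.isLocalMin (prod_mem_nhds (hΩ.mem_nhds hx) (hΩ.mem_nhds hy))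
  have hne : ∀ᶠ t : ℝ in 𝓝 0, x + t • a ≠ y + t • b :=
    hpath.eventually ((isOpen_ne_fun continuous_fst continuous_snd).mem_nhds hxy)
  filter_upwards [hpath.eventually hCmin, hne] with t hle hne
  simpa [← hC _ _ hxy, ← hC _ _ hne] using hle

theorem twoPoint_nonneg_of_isLocalMin [FiniteDimensional ℝ E] {ι : Type*} [Fintype ι]
    (b : OrthonormalBasis ι ℝ E) {W : E → E} {ω : ℝ → ℝ} (hx : ContDiffAt ℝ 2 X x)
    (hy : ContDiffAt ℝ 2 X y) (he : ‖e‖ = 1) (hd : 0 < d) (hyx : y - x = d • e)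
    (hψ : ∀ᶠ s in 𝓝 (d / 2), HasDerivAt ψ (ψ' s) s) (hψ' : HasDerivAt ψ' (ψ'' (d / 2)) (d / 2))
    (hψneg : ψ' (d / 2) < 0) (hODE : ψ'' (d / 2) ≤ -2 * ψ (d / 2) * ψ' (d / 2) + ω (d / 2))
    (hpdex : ∑ i, fderiv ℝ (fderiv ℝ X) x (b i) (b i) = (2 : ℝ) • fderiv ℝ X x (X x) - W x)
    (hpdey : ∑ i, fderiv ℝ (fderiv ℝ X) y (b i) (b i) = (2 : ℝ) • fderiv ℝ X y (X y) - W y)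
    (hW : 2 * ω (d / 2) ≤ ⟪W y - W x, e⟫)
    (hmin : ∀ v w : E, IsLocalMin (fun t : ℝ => twoPoint X ψ (x + t • v) (y + t • w)) 0) :
    0 ≤ twoPoint X ψ x y := by
  have hsecond := neg_two_mul_le_inner_sum_fderiv_fderiv_of_isLocalMin b hx hy he hd hyx hψ hψ'
    hmin
  have hfirst := inner_fderiv_apply_self_sub_le_of_isLocalMin (hx.differentiableAt two_ne_zero)
    (hy.differentiableAt two_ne_zero) he hd hyx hψ.self_of_nhds (hmin _ _)
  rw [hpdex, hpdey, show (2 : ℝ) • fderiv ℝ X y (X y) - W y - ((2 : ℝ) • fderiv ℝ X x (X x) - W x)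
    = (2 : ℝ) • (fderiv ℝ X y (X y) - fderiv ℝ X x (X x)) - (W y - W x) by module,
    inner_sub_left, real_inner_smul_left] at hsecond
  rw [twoPoint_eq_of_sub_eq_smul he hd hyx]
  by_contra! hneg
  nlinarith [mul_pos_of_neg_of_neg hψneg hneg]

end TwoPoint

section Euclidean

variable {E : Type*} [NormedAddCommGroup E] [NormedSpace ℝ E] {ι : Type*} [Fintype ι]

theorem fderiv_euclidean_apply {f : E → EuclideanSpace ℝ ι} {z : E} (hf : DifferentiableAt ℝ f z)
    (k : ι) (v : E) : fderiv ℝ (fun y => f y k) z v = fderiv ℝ f z v k := by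
  have h : HasFDerivAt (EuclideanSpace.proj k ∘ f)
      ((EuclideanSpace.proj k : EuclideanSpace ℝ ι →L[ℝ] ℝ).comp (fderiv ℝ f z)) z :=
    (EuclideanSpace.proj k).hasFDerivAt.comp z hf.hasFDerivAt
  rw [show (fun y => f y k) = EuclideanSpace.proj k ∘ f from rfl, h.fderiv]
  rfl

theorem sum_mul_fderiv_euclidean_apply {X : EuclideanSpace ℝ ι → EuclideanSpace ℝ ι}
    {z : EuclideanSpace ℝ ι} [DecidableEq ι] (hX : DifferentiableAt ℝ X z) (k : ι) :
    ∑ j, X z j * fderiv ℝ (fun y => X y k) z (EuclideanSpace.single j 1) =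
      fderiv ℝ X z (X z) k := by
  conv_rhs => rw [← (EuclideanSpace.basisFun ι ℝ).sum_repr (X z)]
  simp [fderiv_euclidean_apply hX, map_sum]

variable {n : ℕ}

theorem lap_euclidean_apply {X : EuclideanSpace ℝ (Fin n) → EuclideanSpace ℝ (Fin n)}
    {z : EuclideanSpace ℝ (Fin n)} (hX : ContDiffAt ℝ 2 X z) (k : Fin n) :
    lap (fun y => X y k) z = (∑ i, fderiv ℝ (fderiv ℝ X) z (EuclideanSpace.single i 1)
      (EuclideanSpace.single i 1)) k := by
  simp only [lap, WithLp.ofLp_sum, Finset.sum_apply]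
  refine Finset.sum_congr rfl fun i _ => ?_
  have hcoord : (fun y => fderiv ℝ (fun y => X y k) y (EuclideanSpace.single i 1)) =ᶠ[𝓝 z]
      fun y => fderiv ℝ X y (EuclideanSpace.single i 1) k :=
    hX.eventually_differentiableAt.mono fun y hy => fderiv_euclidean_apply hy k _
  rw [hcoord.fderiv_eq,
    fderiv_euclidean_apply (hX.differentiableAt_fderiv.clm_apply (differentiableAt_const _)),
    fderiv_clm_apply hX.differentiableAt_fderiv (differentiableAt_const _)]
  simp

theorem sum_fderiv_fderiv_basisFun_eq_of_lap_eq
    {X : EuclideanSpace ℝ (Fin n) → EuclideanSpace ℝ (Fin n)} {z w : EuclideanSpace ℝ (Fin n)}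
    (hX : ContDiffAt ℝ 2 X z)
    (h : ∀ k, lap (fun y => X y k) z =
      2 * ∑ j, X z j * fderiv ℝ (fun y => X y k) z (EuclideanSpace.single j 1) - w k) :
    ∑ i, fderiv ℝ (fderiv ℝ X) z (EuclideanSpace.basisFun (Fin n) ℝ i)
      (EuclideanSpace.basisFun (Fin n) ℝ i) = (2 : ℝ) • fderiv ℝ X z (X z) - w := by
  ext k
  simpa [lap_euclidean_apply hX, sum_mul_fderiv_euclidean_apply (hX.differentiableAt two_ne_zero)]
    using h k

end Euclidean

theorem stmt_1_general {n : ℕ} (Ω : Set (EuclideanSpace ℝ (Fin n)))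
    (hΩ : IsOpen Ω) (hbd : Bornology.IsBounded Ω)
    (D : ℝ) (hD : Metric.diam Ω = D) (ω : ℝ → ℝ)
    (X : EuclideanSpace ℝ (Fin n) → EuclideanSpace ℝ (Fin n))
    (V : EuclideanSpace ℝ (Fin n) → EuclideanSpace ℝ (Fin n) → EuclideanSpace ℝ (Fin n))
    (hX : ContDiffOn ℝ 2 X Ω)
    (heq : ∀ x ∈ Ω, ∀ k : Fin n, lap (fun y => X y k) x =
      2 * ∑ j, X x j * fderiv ℝ (fun y => X y k) x (EuclideanSpace.single j 1)
        - V x (X x) k)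
    (hVexp : ∀ x ∈ Ω, ∀ y ∈ Ω, x ≠ y →
      2 * ω (‖y - x‖ / 2) ≤ ⟪V y (X y) - V x (X x), ‖y - x‖⁻¹ • (y - x)⟫)
    (ψ ψ' ψ'' : ℝ → ℝ)
    (hψd1 : ∀ s ∈ Ico (0:ℝ) (D/2), HasDerivWithinAt ψ (ψ' s) (Ico (0:ℝ) (D/2)) s)
    (hψd2 : ∀ s ∈ Ico (0:ℝ) (D/2), HasDerivWithinAt ψ' (ψ'' s) (Ico (0:ℝ) (D/2)) s)
    (hψneg : ∀ s ∈ Ico (0:ℝ) (D/2), ψ' s < 0)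
    (hODE : ∀ s ∈ Ico (0:ℝ) (D/2), ψ'' s ≤ -2 * ψ s * ψ' s + ω s)
    (C : EuclideanSpace ℝ (Fin n) → EuclideanSpace ℝ (Fin n) → ℝ)
    (hCdiag : ∀ x, C x x = 0)
    (hC : ∀ x y, x ≠ y → C x y =
      ⟪X y - X x, ‖y - x‖⁻¹ • (y - x)⟫ + 2 * ψ (‖y - x‖ / 2)) :
    ¬ ∃ x₀ ∈ Ω, ∃ y₀ ∈ Ω, C x₀ y₀ < 0 ∧
      IsLocalMinOn (fun p : EuclideanSpace ℝ (Fin n) × EuclideanSpace ℝ (Fin n) => C p.1 p.2) (Ω ×ˢ Ω) (x₀, y₀) := by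
  rintro ⟨x, hx, y, hy, hneg, hmin⟩
  have hxy : x ≠ y := by
    rintro rfl
    exact (hCdiag x ▸ hneg).false
  set d := ‖y - x‖
  set e := d⁻¹ • (y - x)
  have hd : 0 < d := norm_pos_iff.2 (sub_ne_zero.2 hxy.symm)
  have he : ‖e‖ = 1 := by
    rw [norm_smul, norm_inv, Real.norm_of_nonneg hd.le, inv_mul_cancel₀ hd.ne']
  have hyx : y - x = d • e := by simp [e, smul_smul, hd.ne']
  have hs : d / 2 ∈ Ioo 0 (D / 2) :=
    ⟨half_pos hd, by linarith [hD ▸ hΩ.dist_lt_diam hbd hx hy hxy, dist_eq_norm' x y]⟩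
  have hψ : ∀ᶠ s in 𝓝 (d / 2), HasDerivAt ψ (ψ' s) s :=
    eventually_of_mem (Ioo_mem_nhds hs.1 hs.2) fun s hs =>
      (hψd1 s (Ioo_subset_Ico_self hs)).hasDerivAt (Ico_mem_nhds hs.1 hs.2)
  have hψ' : HasDerivAt ψ' (ψ'' (d / 2)) (d / 2) :=
    (hψd2 _ (Ioo_subset_Ico_self hs)).hasDerivAt (Ico_mem_nhds hs.1 hs.2)
  have hX2 : ∀ z ∈ Ω, ContDiffAt ℝ 2 X z := fun z hz => hX.contDiffAt (hΩ.mem_nhds hz)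
  have hpde : ∀ z ∈ Ω, _ := fun z hz =>
    sum_fderiv_fderiv_basisFun_eq_of_lap_eq (hX2 z hz) (heq z hz)
  have hnonneg := twoPoint_nonneg_of_isLocalMin (EuclideanSpace.basisFun (Fin n) ℝ)
    (W := fun z => V z (X z)) (hX2 x hx) (hX2 y hy) he hd hyx hψ hψ'
    (hψneg _ (Ioo_subset_Ico_self hs)) (hODE _ (Ioo_subset_Ico_self hs))
    (hpde x hx) (hpde y hy) (hVexp x hx y hy hxy)
    (isLocalMin_twoPoint_comp_line hΩ hx hy hxy hC hmin)
  exact hnonneg.not_gt ((hC x y hxy).symm.trans_lt hneg)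

theorem stmt_1 {n : ℕ} (Ω : Set (EuclideanSpace ℝ (Fin n)))
    (hΩ : IsOpen Ω) (hconn : IsConnected Ω) (hbd : Bornology.IsBounded Ω)
    (D : ℝ) (hD : Metric.diam Ω = D) (ω : ℝ → ℝ)
    (X : EuclideanSpace ℝ (Fin n) → EuclideanSpace ℝ (Fin n))
    (V : EuclideanSpace ℝ (Fin n) → EuclideanSpace ℝ (Fin n) → EuclideanSpace ℝ (Fin n))
    (hX : ContDiffOn ℝ 2 X Ω)
    (hV : ContDiffOn ℝ 1 (fun p : EuclideanSpace ℝ (Fin n) × EuclideanSpace ℝ (Fin n) => V p.1 p.2) (Ω ×ˢ univ))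
    (heq : ∀ x ∈ Ω, ∀ k : Fin n, lap (fun y => X y k) x =
      2 * ∑ j, X x j * fderiv ℝ (fun y => X y k) x (EuclideanSpace.single j 1)
        - V x (X x) k)
    (hVexp : ∀ x ∈ Ω, ∀ y ∈ Ω, x ≠ y →
      2 * ω (‖y - x‖ / 2) ≤ ⟪V y (X y) - V x (X x), ‖y - x‖⁻¹ • (y - x)⟫)
    (ψ ψ' ψ'' : ℝ → ℝ)
    (hψ0 : ψ 0 = 0)
    (hψd1 : ∀ s ∈ Ico (0:ℝ) (D/2), HasDerivWithinAt ψ (ψ' s) (Ico (0:ℝ) (D/2)) s)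
    (hψd2 : ∀ s ∈ Ico (0:ℝ) (D/2), HasDerivWithinAt ψ' (ψ'' s) (Ico (0:ℝ) (D/2)) s)
    (hψc : ContinuousOn ψ'' (Ico (0:ℝ) (D/2)))
    (hψneg : ∀ s ∈ Ico (0:ℝ) (D/2), ψ' s < 0)
    (hODE : ∀ s ∈ Ico (0:ℝ) (D/2), ψ'' s ≤ -2 * ψ s * ψ' s + ω s)
    (C : EuclideanSpace ℝ (Fin n) → EuclideanSpace ℝ (Fin n) → ℝ)
    (hCdiag : ∀ x, C x x = 0)
    (hC : ∀ x y, x ≠ y → C x y =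
      ⟪X y - X x, ‖y - x‖⁻¹ • (y - x)⟫ + 2 * ψ (‖y - x‖ / 2)) :
    ¬ ∃ x₀ ∈ Ω, ∃ y₀ ∈ Ω, C x₀ y₀ < 0 ∧
      IsLocalMinOn (fun p : EuclideanSpace ℝ (Fin n) × EuclideanSpace ℝ (Fin n) => C p.1 p.2) (Ω ×ˢ Ω) (x₀, y₀) :=
  stmt_1_general Ω hΩ hbd D hD ω X V hX heq hVexp ψ ψ' ψ'' hψd1 hψd2 hψneg hODE C hCdiag hC
end

section
/- Let Ω ⊂ ℝⁿ be a bounded open set with C² boundary whose second fundamental form with respect to the outward normal is positive definite (strictly convex), with diameter D, and let q be a convex function, C¹ on the closure of Ω. Let φ₀ be a first Dirichlet eigenfunction of L_q = Δ − q with eigenvalue λ₀. Then λ₀ ≥ n(π/D)² + inf_{x ∈ Ω} q(x). -/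
open scoped RealInnerProductSpace
open Set MeasureTheory

/-!
`Ω` lies in a cube of side `D`, hence in every box `∏ j, (c j, c j + L)` with `L = D + ε`. The box
eigenfunction `ψ = ∏ j, sin (π (x j - c j) / L)` is positive on `closure Ω` and satisfies
`∂ᵢ²ψ = -(π / L)² ψ` in each coordinate direction. Since `φ₀` vanishes on `∂Ω`, the maximum `m` of
`φ₀ / ψ` over `closure Ω` is attained at some `x₀ ∈ Ω`, where `mψ` touches `φ₀` from above;
comparing second derivatives there gives `Δφ₀ x₀ ≤ -n (π / L)² φ₀ x₀`, so the eigenvalue equation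
yields `λ₀ ≥ n (π / L)² + q x₀ ≥ n (π / L)² + inf q`. Finally let `ε → 0`.
-/

open Filter Topology Real

/-- If `f'' < 0`, the second-derivative test makes `t₀` a local maximum as well, so `f` is locally
constant and `f'' = 0`. -/
theorem deriv_deriv_nonneg_of_isLocalMin {f : ℝ → ℝ} {t₀ : ℝ} (hmin : IsLocalMin f t₀)
    (hc : ContinuousAt f t₀) : 0 ≤ deriv (deriv f) t₀ := by
  by_contra! hneg
  have hmax := isLocalMax_of_deriv_deriv_neg hneg hmin.deriv_eq_zero hc
  have hconst : f =ᶠ[𝓝 t₀] fun _ => f t₀ := by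
    filter_upwards [hmin, hmax] with t h₁ h₂
    exact le_antisymm h₂ h₁
  rw [hconst.deriv.deriv_eq, deriv_const'] at hneg
  simp at hneg

theorem le_of_hasDerivAt_deriv_of_eventuallyLE {F G : ℝ → ℝ} {a b t₀ : ℝ}
    (hFd : ∀ᶠ t in 𝓝 t₀, DifferentiableAt ℝ F t)
    (hGd : ∀ᶠ t in 𝓝 t₀, DifferentiableAt ℝ G t)
    (hF : HasDerivAt (deriv F) a t₀) (hG : HasDerivAt (deriv G) b t₀)
    (hle : F ≤ᶠ[𝓝 t₀] G) (heq : F t₀ = G t₀) : a ≤ b := by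
  have hmin : IsLocalMin (G - F) t₀ := by
    filter_upwards [hle] with t ht
    simp only [Pi.sub_apply, heq, sub_self, sub_nonneg, ht]
  have hderiv : deriv (G - F) =ᶠ[𝓝 t₀] deriv G - deriv F := by
    filter_upwards [hFd, hGd] with t hFt hGt
    exact deriv_sub hGt hFt
  have h2 : deriv (deriv (G - F)) t₀ = b - a :=
    ((hG.sub hF).congr_of_eventuallyEq hderiv).deriv
  have hc : ContinuousAt (G - F) t₀ :=
    hGd.self_of_nhds.continuousAt.sub hFd.self_of_nhds.continuousAt
  linarith [deriv_deriv_nonneg_of_isLocalMin hmin hc]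

section Line

variable {E : Type*} [NormedAddCommGroup E] [NormedSpace ℝ E] {f : E → ℝ} {x : E}

theorem hasDerivAt_add_smul (x v : E) (t : ℝ) : HasDerivAt (fun s : ℝ => x + s • v) v t := by
  simpa using ((hasDerivAt_id t).smul_const v).const_add x

theorem tendsto_add_smul_nhds_zero (x v : E) :
    Tendsto (fun t : ℝ => x + t • v) (𝓝 0) (𝓝 x) := by
  simpa using (show Continuous fun t : ℝ => x + t • v by fun_prop).tendsto 0

theorem ContDiffAt.eventually_hasDerivAt_comp_add_smul (hf : ContDiffAt ℝ 2 f x) (v : E) :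
    ∀ᶠ t in 𝓝 (0 : ℝ),
      HasDerivAt (fun s : ℝ => f (x + s • v)) (fderiv ℝ f (x + t • v) v) t := by
  have hdiff : ∀ᶠ y in 𝓝 x, DifferentiableAt ℝ f y :=
    (hf.eventually (by simp)).mono fun y hy => hy.differentiableAt (by simp)
  filter_upwards [(tendsto_add_smul_nhds_zero x v).eventually hdiff] with t ht
  exact ht.hasFDerivAt.comp_hasDerivAt t (hasDerivAt_add_smul x v t)

theorem ContDiffAt.hasDerivAt_deriv_comp_add_smul (hf : ContDiffAt ℝ 2 f x) (v : E) :
    HasDerivAt (deriv fun t : ℝ => f (x + t • v))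
      (fderiv ℝ (fun y => fderiv ℝ f y v) x v) 0 := by
  have hderiv :
      (deriv fun t : ℝ => f (x + t • v)) =ᶠ[𝓝 0] fun t => fderiv ℝ f (x + t • v) v :=
    (hf.eventually_hasDerivAt_comp_add_smul v).mono fun t ht => ht.deriv
  have hdiff : DifferentiableAt ℝ (fun y => fderiv ℝ f y v) x :=
    ((hf.fderiv_right (m := 1) (by norm_num)).differentiableAt (by simp)).clm_apply
      (differentiableAt_const v)
  have hdiff' : HasFDerivAt (fun y => fderiv ℝ f y v) (fderiv ℝ (fun y => fderiv ℝ f y v) x)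
      (x + (0 : ℝ) • v) := by simpa using hdiff.hasFDerivAt
  have hcomp : HasDerivAt (fun t : ℝ => fderiv ℝ f (x + t • v) v)
      (fderiv ℝ (fun y => fderiv ℝ f y v) x v) 0 :=
    hdiff'.comp_hasDerivAt (l := fun y => fderiv ℝ f y v) 0 (hasDerivAt_add_smul x v 0)
  exact hcomp.congr_of_eventuallyEq hderiv

end Line

theorem hasDerivAt_deriv_const_mul_sin (A k a : ℝ) :
    HasDerivAt (deriv fun t => A * sin (k * (a + t))) (-k ^ 2 * (A * sin (k * a))) 0 := by
  have hinner (t : ℝ) : HasDerivAt (fun s => k * (a + s)) k t := by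
    simpa using ((hasDerivAt_id t).const_add a).const_mul k
  have hderiv :
      (deriv fun t => A * sin (k * (a + t))) = fun t => A * k * cos (k * (a + t)) := by
    funext t
    rw [((hinner t).sin.const_mul A).deriv]
    ring
  rw [hderiv]
  have h := (hinner 0).cos.const_mul (A * k)
  rw [add_zero] at h
  exact h.congr_deriv (by ring)

section Box

variable {n : ℕ}

noncomputable def boxEigenfunction (c : Fin n → ℝ) (L : ℝ) (y : EuclideanSpace ℝ (Fin n)) : ℝ :=
  ∏ j, sin (π / L * (y j - c j))

theorem continuous_boxEigenfunction (c : Fin n → ℝ) (L : ℝ) :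
    Continuous (boxEigenfunction c L) := by
  unfold boxEigenfunction
  fun_prop

theorem boxEigenfunction_pos {c : Fin n → ℝ} {L : ℝ} {y : EuclideanSpace ℝ (Fin n)}
    (hL : 0 < L) (hy : ∀ j, y j ∈ Ioo (c j) (c j + L)) : 0 < boxEigenfunction c L y := by
  refine Finset.prod_pos fun j _ => sin_pos_of_pos_of_lt_pi ?_ ?_
  · exact mul_pos (by positivity) (sub_pos.2 (hy j).1)
  · calc π / L * (y j - c j) < π / L * L := by gcongr; linarith [(hy j).2]
      _ = π := div_mul_cancel₀ π hL.ne'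

theorem boxEigenfunction_add_smul_single (c : Fin n → ℝ) (L : ℝ)
    (y : EuclideanSpace ℝ (Fin n)) (i : Fin n) (t : ℝ) :
    boxEigenfunction c L (y + t • EuclideanSpace.single i 1)
      = (∏ j ∈ Finset.univ.erase i, sin (π / L * (y j - c j))) * sin (π / L * (y i - c i + t)) := by
  rw [boxEigenfunction, ← Finset.prod_erase_mul _ _ (Finset.mem_univ i)]
  congr 1
  · refine Finset.prod_congr rfl fun j hj => ?_
    simp [Finset.ne_of_mem_erase hj]
  · simp only [PiLp.add_apply, PiLp.smul_apply, PiLp.single_eq_same, smul_eq_mul, mul_one]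
    ring_nf

theorem fderiv_fderiv_apply_le_of_eventuallyLE_boxEigenfunction
    {φ : EuclideanSpace ℝ (Fin n) → ℝ} {x : EuclideanSpace ℝ (Fin n)} {c : Fin n → ℝ} {L m : ℝ}
    (hφ : ContDiffAt ℝ 2 φ x)
    (hle : φ ≤ᶠ[𝓝 x] fun y => m * boxEigenfunction c L y)
    (heq : φ x = m * boxEigenfunction c L x) (i : Fin n) :
    fderiv ℝ (fun y => fderiv ℝ φ y (EuclideanSpace.single i 1)) x (EuclideanSpace.single i 1)
      ≤ -(π / L) ^ 2 * φ x := by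
  set e : EuclideanSpace ℝ (Fin n) := EuclideanSpace.single i 1
  set C := ∏ j ∈ Finset.univ.erase i, sin (π / L * (x j - c j))
  have hline : (fun t : ℝ => m * boxEigenfunction c L (x + t • e))
      = fun t => m * C * sin (π / L * (x i - c i + t)) := by
    funext t
    rw [boxEigenfunction_add_smul_single]
    ring
  have hψx : boxEigenfunction c L x = C * sin (π / L * (x i - c i)) := by
    simpa using boxEigenfunction_add_smul_single c L x i 0
  refine le_of_hasDerivAt_deriv_of_eventuallyLE
    (F := fun t : ℝ => φ (x + t • e)) (G := fun t : ℝ => m * boxEigenfunction c L (x + t • e))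
    ((hφ.eventually_hasDerivAt_comp_add_smul e).mono fun t ht => ht.differentiableAt)
    (Eventually.of_forall fun t => by rw [hline]; fun_prop)
    (hφ.hasDerivAt_deriv_comp_add_smul e) ?_
    ((tendsto_add_smul_nhds_zero x e).eventually hle) (by simpa using heq)
  rw [hline, heq, hψx]
  exact (hasDerivAt_deriv_const_mul_sin (m * C) (π / L) (x i - c i)).congr_deriv (by ring)

theorem lap_le_of_eventuallyLE_boxEigenfunction {φ : EuclideanSpace ℝ (Fin n) → ℝ}
    {x : EuclideanSpace ℝ (Fin n)} {c : Fin n → ℝ} {L m : ℝ} (hφ : ContDiffAt ℝ 2 φ x)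
    (hle : φ ≤ᶠ[𝓝 x] fun y => m * boxEigenfunction c L y)
    (heq : φ x = m * boxEigenfunction c L x) :
    lap φ x ≤ -(n * (π / L) ^ 2) * φ x := by
  calc lap φ x ≤ ∑ _i : Fin n, -(π / L) ^ 2 * φ x :=
        Finset.sum_le_sum fun i _ =>
          fderiv_fderiv_apply_le_of_eventuallyLE_boxEigenfunction hφ hle heq i
    _ = -(n * (π / L) ^ 2) * φ x := by
      simp only [Finset.sum_const, Finset.card_univ, Fintype.card_fin, nsmul_eq_mul]
      ring

end Box

/-- The least multiple of `ψ` lying above `φ` on `closure Ω` touches `φ` inside `Ω`, since `φ`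
vanishes on the frontier and is positive inside. -/
theorem IsOpen.exists_mem_eventuallyLE_const_mul {X : Type*} [TopologicalSpace X] {Ω : Set X}
    (hΩ : IsOpen Ω) (hK : IsCompact (closure Ω)) (hne : Ω.Nonempty) {φ ψ : X → ℝ}
    (hφ : ContinuousOn φ (closure Ω)) (hψ : ContinuousOn ψ (closure Ω))
    (hψpos : ∀ x ∈ closure Ω, 0 < ψ x) (hφpos : ∀ x ∈ Ω, 0 < φ x)
    (hφbd : ∀ x ∈ frontier Ω, φ x = 0) :
    ∃ x₀ ∈ Ω, ∃ m : ℝ, φ ≤ᶠ[𝓝 x₀] (fun y => m * ψ y) ∧ φ x₀ = m * ψ x₀ := by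
  obtain ⟨x₀, hx₀K, hmax⟩ := hK.exists_isMaxOn hne.closure
    (hφ.div hψ fun x hx => (hψpos x hx).ne')
  have hle : ∀ y ∈ closure Ω, φ y ≤ φ x₀ / ψ x₀ * ψ y := fun y hy =>
    (div_le_iff₀ (hψpos y hy)).1 (hmax hy)
  have hx₀ : x₀ ∈ Ω := by
    by_contra hx₀
    have hzero : φ x₀ = 0 := hφbd x₀ ⟨hx₀K, by rwa [hΩ.interior_eq]⟩
    obtain ⟨w, hw⟩ := hne
    have := hle w (subset_closure hw)
    rw [hzero, zero_div, zero_mul] at this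
    exact (hφpos w hw).not_ge this
  refine ⟨x₀, hx₀, φ x₀ / ψ x₀, ?_, (div_mul_cancel₀ _ (hψpos x₀ hx₀K).ne').symm⟩
  filter_upwards [hΩ.mem_nhds hx₀] with y hy
  exact hle y (subset_closure hy)

theorem exists_add_le_eigenvalue_of_subset_box {n : ℕ} {Ω : Set (EuclideanSpace ℝ (Fin n))}
    {φ₀ q : EuclideanSpace ℝ (Fin n) → ℝ} {lam0 L : ℝ} {c : Fin n → ℝ}
    (hΩ : IsOpen Ω) (hK : IsCompact (closure Ω)) (hne : Ω.Nonempty)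
    (hφC : ContDiffOn ℝ 2 φ₀ (closure Ω)) (hφpos : ∀ x ∈ Ω, 0 < φ₀ x)
    (hφbd : ∀ x ∈ frontier Ω, φ₀ x = 0)
    (heig : ∀ x ∈ Ω, lap φ₀ x - q x * φ₀ x = -lam0 * φ₀ x)
    (hL : 0 < L) (hbox : ∀ x ∈ closure Ω, ∀ j, x j ∈ Ioo (c j) (c j + L)) :
    ∃ x₀ ∈ Ω, n * (π / L) ^ 2 + q x₀ ≤ lam0 := by
  obtain ⟨x₀, hx₀, m, hle, heq⟩ := hΩ.exists_mem_eventuallyLE_const_mul hK hne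
    hφC.continuousOn (continuous_boxEigenfunction c L).continuousOn
    (fun x hx => boxEigenfunction_pos hL (hbox x hx)) hφpos hφbd
  have hφx₀ : ContDiffAt ℝ 2 φ₀ x₀ :=
    hφC.contDiffAt (mem_of_superset (hΩ.mem_nhds hx₀) subset_closure)
  have hlap := lap_le_of_eventuallyLE_boxEigenfunction hφx₀ hle heq
  refine ⟨x₀, hx₀, le_of_mul_le_mul_right ?_ (hφpos x₀ hx₀)⟩
  linarith [heig x₀ hx₀]

theorem IsCompact.exists_forall_apply_mem_Icc {n : ℕ} {K : Set (EuclideanSpace ℝ (Fin n))}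
    (hK : IsCompact K) (hne : K.Nonempty) :
    ∃ c : Fin n → ℝ, ∀ x ∈ K, ∀ j, x j ∈ Icc (c j) (c j + Metric.diam K) := by
  choose y hyK hymin using fun j : Fin n =>
    hK.exists_isMinOn hne (f := fun x => x j) (by fun_prop)
  refine ⟨fun j => y j j, fun x hx j => ⟨hymin j hx, ?_⟩⟩
  have hdist : dist (x j) (y j j) ≤ Metric.diam K :=
    (PiLp.dist_apply_le x (y j) j).trans (Metric.dist_le_diam_of_mem hK.isBounded hx (hyK j))
  linarith [le_abs_self (x j - y j j), Real.dist_eq (x j) (y j j)]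

theorem le_of_forall_pos_mul_div_add_sq_le {a b D l : ℝ} (hb : 0 ≤ b) (hD : 0 ≤ D)
    (h : ∀ ε > 0, b * (a / (D + ε)) ^ 2 ≤ l) : b * (a / D) ^ 2 ≤ l := by
  rcases hD.eq_or_lt with rfl | hDpos
  · simpa using (mul_nonneg hb (sq_nonneg _)).trans (h 1 one_pos)
  · have hcont : ContinuousAt (fun ε => b * (a / (D + ε)) ^ 2) 0 :=
      ((continuousAt_const.div (by fun_prop) (by simpa using hDpos.ne')).pow 2).const_mul b
    have htend :
        Tendsto (fun ε => b * (a / (D + ε)) ^ 2) (𝓝[>] 0) (𝓝 (b * (a / D) ^ 2)) := by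
      simpa using hcont.tendsto.mono_left nhdsWithin_le_nhds
    exact le_of_tendsto htend (eventually_nhdsWithin_of_forall h)

theorem stmt_10_general {n : ℕ}
    (Ω : Set (EuclideanSpace ℝ (Fin n)))
    (hΩ : IsOpen Ω) (hbd : Bornology.IsBounded Ω)
    (hne : Ω.Nonempty)
    (D : ℝ) (hD : Metric.diam Ω = D)
    (q : EuclideanSpace ℝ (Fin n) → ℝ)
    (hqC : ContDiffOn ℝ 1 q (closure Ω))
    (φ₀ : EuclideanSpace ℝ (Fin n) → ℝ) (lam0 : ℝ)
    (hφC : ContDiffOn ℝ 2 φ₀ (closure Ω))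
    (hφpos : ∀ x ∈ Ω, 0 < φ₀ x)
    (hφbd : ∀ x ∈ frontier Ω, φ₀ x = 0)
    (heig : ∀ x ∈ Ω, lap φ₀ x - q x * φ₀ x = -lam0 * φ₀ x)
 :
    (n : ℝ) * (Real.pi / D) ^ 2 + sInf (q '' Ω) ≤ lam0 := by
  have hK : IsCompact (closure Ω) := hbd.isCompact_closure
  have hD0 : 0 ≤ D := hD ▸ Metric.diam_nonneg
  have hqbdd : BddBelow (q '' Ω) :=
    (hK.image_of_continuousOn hqC.continuousOn).bddBelow.mono (image_mono subset_closure)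
  obtain ⟨c, hc⟩ := hK.exists_forall_apply_mem_Icc hne.closure
  rw [Metric.diam_closure, hD] at hc
  suffices ∀ ε > 0, (n : ℝ) * (π / (D + ε)) ^ 2 ≤ lam0 - sInf (q '' Ω) by
    linarith [le_of_forall_pos_mul_div_add_sq_le (Nat.cast_nonneg n) hD0 this]
  intro ε hε
  -- widen the box by `ε / 2` on each side so that `boxEigenfunction` is positive on `closure Ω`
  obtain ⟨x₀, hx₀, hle⟩ := exists_add_le_eigenvalue_of_subset_box
    (c := fun j => c j - ε / 2) (L := D + ε) hΩ hK hne hφC hφpos hφbd heig (by linarith)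
    fun x hx j =>
      ⟨by linarith [(hc x hx j).1], by linarith [(hc x hx j).2]⟩
  linarith [csInf_le hqbdd (mem_image_of_mem q hx₀)]

theorem stmt_10 {n : ℕ}
    (Ω : Set (EuclideanSpace ℝ (Fin n))) (ρ : EuclideanSpace ℝ (Fin n) → ℝ)
    (hΩ : IsOpen Ω) (hbd : Bornology.IsBounded Ω)
    (hρ : ContDiff ℝ 2 ρ)
    (hΩρ : Ω = {x | ρ x < 0})
    (hfr : frontier Ω = {x | ρ x = 0})
    (hν : ∀ x ∈ frontier Ω, gradient ρ x ≠ 0)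
    (hsc : ∀ x ∈ frontier Ω, ∀ v : EuclideanSpace ℝ (Fin n), v ≠ 0 → ⟪gradient ρ x, v⟫ = 0 →
      0 < fderiv ℝ (fun y => fderiv ℝ ρ y v) x v)
    (hne : Ω.Nonempty)
    (D : ℝ) (hD : Metric.diam Ω = D)
    (q : EuclideanSpace ℝ (Fin n) → ℝ)
    (hq : ConvexOn ℝ (closure Ω) q) (hqC : ContDiffOn ℝ 1 q (closure Ω))
    (φ₀ : EuclideanSpace ℝ (Fin n) → ℝ) (lam0 : ℝ)
    (hφC : ContDiffOn ℝ 2 φ₀ (closure Ω))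
    (hφpos : ∀ x ∈ Ω, 0 < φ₀ x)
    (hφbd : ∀ x ∈ frontier Ω, φ₀ x = 0)
    (hφν : ∀ x ∈ frontier Ω, fderivWithin ℝ φ₀ (closure Ω) x (gradient ρ x) < 0)
    (heig : ∀ x ∈ Ω, lap φ₀ x - q x * φ₀ x = -lam0 * φ₀ x)
 :
    (n : ℝ) * (Real.pi / D) ^ 2 + sInf (q '' Ω) ≤ lam0 :=
  stmt_10_general Ω hΩ hbd hne D hD q hqC φ₀ lam0 hφC hφpos hφbd heig
end
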